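/- arXiv:1902.02431 — 2 statements merged into one kernel-verified Lean document; each statement's English description precedes it below -/
import Mathlib

section
/- For every real number x with −1 ≤ x ≤ 1, one has x²/2 ≤ ((1+x)/2)·log₂(1+x) + ((1−x)/2)·log₂(1−x) ≤ x², where at x = ±1 the term 0·log₂(0) is interpreted as 0. -/
open Real Set

noncomputable def gg (x : ℝ) : ℝ := (1+x) * Real.log (1+x) + (1-x) * Real.log (1-x)

lemma cont_gg : Continuous gg := by
  have c1 : Continuous fun x : ℝ => (1+x) * Real.log (1+x) :=
    Real.continuous_mul_log.comp (continuous_const.add continuous_id)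
  have c2 : Continuous fun x : ℝ => (1-x) * Real.log (1-x) :=
    Real.continuous_mul_log.comp (continuous_const.sub continuous_id)
  exact c1.add c2

lemma hasDerivAt_gg {x : ℝ} (hx1 : -1 < x) (hx2 : x < 1) :
    HasDerivAt gg (Real.log (1+x) - Real.log (1-x)) x := by
  have h1p : (0:ℝ) < 1 + x := by linarith
  have h1m : (0:ℝ) < 1 - x := by linarith
  have da : HasDerivAt (fun y : ℝ => 1 + y) 1 x := by
    simpa using (hasDerivAt_id x).const_add (1:ℝ)
  have db : HasDerivAt (fun y : ℝ => 1 - y) (-1) x := by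
    simpa using (hasDerivAt_id x).const_sub (1:ℝ)
  have dA : HasDerivAt (fun y : ℝ => (1+y) * Real.log (1+y)) (Real.log (1+x) + 1) x := by
    have := da.mul (da.log h1p.ne')
    refine HasDerivAt.congr_deriv this (Eq.symm ?_)
    field_simp
  have dB : HasDerivAt (fun y : ℝ => (1-y) * Real.log (1-y)) (-Real.log (1-x) - 1) x := by
    have := db.mul (db.log h1m.ne')
    refine HasDerivAt.congr_deriv this (Eq.symm ?_)
    field_simp
    ring
  have := dA.add dB
  refine HasDerivAt.congr_deriv this (Eq.symm ?_)
  ring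

lemma hasDerivAt_L {x : ℝ} (hx1 : -1 < x) (hx2 : x < 1) :
    HasDerivAt (fun t : ℝ => Real.log (1+t) - Real.log (1-t)) (1/(1+x) + 1/(1-x)) x := by
  have h1p : (0:ℝ) < 1 + x := by linarith
  have h1m : (0:ℝ) < 1 - x := by linarith
  have da : HasDerivAt (fun y : ℝ => 1 + y) 1 x := by
    simpa using (hasDerivAt_id x).const_add (1:ℝ)
  have db : HasDerivAt (fun y : ℝ => 1 - y) (-1) x := by
    simpa using (hasDerivAt_id x).const_sub (1:ℝ)
  have := (da.log h1p.ne').sub (db.log h1m.ne')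
  refine HasDerivAt.congr_deriv this (Eq.symm ?_)
  ring

lemma L_ge {x : ℝ} (hx0 : 0 ≤ x) (hx1 : x < 1) :
    2*x ≤ Real.log (1+x) - Real.log (1-x) := by
  set f : ℝ → ℝ := fun t => Real.log (1+t) - Real.log (1-t) - 2*t with hf
  have key : MonotoneOn f (Ico 0 1) := by
    have hd : ∀ t ∈ Ico (0:ℝ) 1, HasDerivAt f (1/(1+t) + 1/(1-t) - 2) t := by
      intro t ht
      exact (hasDerivAt_L (by linarith [ht.1]) ht.2).sub (by simpa using (hasDerivAt_id t).const_mul (2:ℝ))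
    apply monotoneOn_of_deriv_nonneg (convex_Ico 0 1)
    · exact fun t ht => (hd t ht).continuousAt.continuousWithinAt
    · rw [interior_Ico]
      exact fun t ht => ((hd t (Ioo_subset_Ico_self ht)).differentiableAt).differentiableWithinAt
    · rw [interior_Ico]
      intro t ht
      rw [(hd t (Ioo_subset_Ico_self ht)).deriv]
      have h1p : (0:ℝ) < 1 + t := by linarith [ht.1]
      have h1m : (0:ℝ) < 1 - t := by linarith [ht.2]
      rw [div_add_div _ _ h1p.ne' h1m.ne', sub_nonneg, le_div_iff₀ (by positivity)]
      nlinarith [sq_nonneg t]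
  have h0 : f 0 = 0 := by simp [hf]
  have := key (by constructor <;> norm_num) (⟨hx0, hx1⟩ : x ∈ Ico (0:ℝ) 1) hx0
  rw [h0] at this
  simp only [hf] at this
  linarith

lemma lower_gg {x : ℝ} (hx0 : 0 ≤ x) (hx1 : x ≤ 1) : x^2 ≤ gg x := by
  set F : ℝ → ℝ := fun t => gg t - t^2 with hF
  have key : MonotoneOn F (Icc 0 1) := by
    apply monotoneOn_of_deriv_nonneg (convex_Icc 0 1)
    · exact (cont_gg.sub (continuous_pow 2)).continuousOn
    · rw [interior_Icc]
      intro t ht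
      exact (((hasDerivAt_gg (by linarith [ht.1]) ht.2).sub (hasDerivAt_pow 2 t)).differentiableAt).differentiableWithinAt
    · rw [interior_Icc]
      intro t ht
      have hd := (hasDerivAt_gg (by linarith [ht.1]) ht.2).sub (hasDerivAt_pow 2 t)
      rw [show deriv F t = _ from hd.deriv]
      have := L_ge (le_of_lt ht.1) ht.2
      norm_num
      linarith
  have h0 : F 0 = 0 := by simp [hF, gg]
  have := key (by constructor <;> norm_num) (⟨hx0, hx1⟩ : x ∈ Icc (0:ℝ) 1) hx0
  rw [h0] at this
  simp only [hF] at this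
  linarith

lemma psi_ge {x : ℝ} (hx0 : 0 ≤ x) (hx1 : x < 1) :
    Real.log (1+x) - Real.log (1-x) ≤ 2*x/(1-x^2) := by
  set f : ℝ → ℝ := fun t => 2*t/(1-t^2) - (Real.log (1+t) - Real.log (1-t)) with hf
  have hd : ∀ t : ℝ, -1 < t → t < 1 →
      HasDerivAt f ((2*(1-t^2) - 2*t*(2*t^1*(0-1)))/((1-t^2)^2) - (1/(1+t) + 1/(1-t))) t := by
    intro t ht1 ht2
    have hden : (1:ℝ) - t^2 ≠ 0 := by nlinarith
    have d1 : HasDerivAt (fun y : ℝ => 2*y) 2 t := by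
      simpa using (hasDerivAt_id t).const_mul (2:ℝ)
    have d2 : HasDerivAt (fun y : ℝ => 1 - y^2) (2*t^1*(0-1)) t := by
      have := ((hasDerivAt_pow 2 t).const_sub (1:ℝ))
      refine HasDerivAt.congr_deriv this (Eq.symm ?_)
      push_cast
      ring
    exact (d1.div d2 hden).sub (hasDerivAt_L ht1 ht2)
  have key : MonotoneOn f (Ico 0 1) := by
    apply monotoneOn_of_deriv_nonneg (convex_Ico 0 1)
    · exact fun t ht => (hd t (by linarith [ht.1]) ht.2).continuousAt.continuousWithinAt
    · rw [interior_Ico]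
      exact fun t ht => ((hd t (by linarith [ht.1]) ht.2).differentiableAt).differentiableWithinAt
    · rw [interior_Ico]
      intro t ht
      rw [(hd t (by linarith [ht.1]) ht.2).deriv]
      have h1p : (0:ℝ) < 1 + t := by linarith [ht.1]
      have h1m : (0:ℝ) < 1 - t := by linarith [ht.2]
      have e1 : 1/(1+t) + 1/(1-t) = 2/(1-t^2) := by
        have h3 : (1:ℝ)-t^2 = (1+t)*(1-t) := by ring
        rw [h3, div_add_div _ _ h1p.ne' h1m.ne']
        congr 1
        ring
      have e2 : (2*(1-t^2) - 2*t*(2*t^1*(0-1)))/((1-t^2)^2) = (2+2*t^2)/(1-t^2)^2 := by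
        ring_nf
      rw [e1, e2]
      have hden : (0:ℝ) < 1 - t^2 := by nlinarith
      rw [sub_nonneg, div_le_div_iff₀ hden (by positivity)]
      nlinarith
  have h0 : f 0 = 0 := by simp [hf]
  have := key (by constructor <;> norm_num) (⟨hx0, hx1⟩ : x ∈ Ico (0:ℝ) 1) hx0
  rw [h0] at this
  simp only [hf] at this
  linarith

lemma phi_ge {x : ℝ} (hx0 : 0 ≤ x) (hx1 : x < 1) :
    2 * gg x ≤ x * (Real.log (1+x) - Real.log (1-x)) := by
  set f : ℝ → ℝ := fun t => t * (Real.log (1+t) - Real.log (1-t)) - 2 * gg t with hf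
  have hd : ∀ t : ℝ, -1 < t → t < 1 →
      HasDerivAt f (1 * (Real.log (1+t) - Real.log (1-t)) + t * (1/(1+t) + 1/(1-t))
        - 2 * (Real.log (1+t) - Real.log (1-t))) t := by
    intro t ht1 ht2
    exact ((hasDerivAt_id t).mul (hasDerivAt_L ht1 ht2)).sub
      ((hasDerivAt_gg ht1 ht2).const_mul 2)
  have key : MonotoneOn f (Ico 0 1) := by
    apply monotoneOn_of_deriv_nonneg (convex_Ico 0 1)
    · exact fun t ht => (hd t (by linarith [ht.1]) ht.2).continuousAt.continuousWithinAt
    · rw [interior_Ico]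
      exact fun t ht => ((hd t (by linarith [ht.1]) ht.2).differentiableAt).differentiableWithinAt
    · rw [interior_Ico]
      intro t ht
      rw [(hd t (by linarith [ht.1]) ht.2).deriv]
      have h1p : (0:ℝ) < 1 + t := by linarith [ht.1]
      have h1m : (0:ℝ) < 1 - t := by linarith [ht.2]
      have hpsi := psi_ge (le_of_lt ht.1) ht.2
      have e1 : t * (1/(1+t) + 1/(1-t)) = 2*t/(1-t^2) := by
        rw [div_add_div _ _ h1p.ne' h1m.ne',
          show (1:ℝ)*(1-t)+(1+t)*1 = 2 by ring, show ((1:ℝ)+t)*(1-t) = 1-t^2 by ring]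
        ring
      rw [e1]
      linarith
  have h0 : f 0 = 0 := by simp [hf, gg]
  have := key (by constructor <;> norm_num) (⟨hx0, hx1⟩ : x ∈ Ico (0:ℝ) 1) hx0
  rw [h0] at this
  simp only [hf] at this
  linarith

lemma gg_one : gg 1 = 2 * Real.log 2 := by
  simp [gg]
  norm_num

lemma upper_gg {x : ℝ} (hx0 : 0 ≤ x) (hx1 : x ≤ 1) : gg x ≤ 2 * Real.log 2 * x^2 := by
  rcases eq_or_lt_of_le hx0 with h | hpos
  · simp [gg, ← h]
  set q : ℝ → ℝ := fun t => gg t / t^2 with hq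
  have key : MonotoneOn q (Ioc 0 1) := by
    apply monotoneOn_of_deriv_nonneg (convex_Ioc 0 1)
    · exact ContinuousOn.div cont_gg.continuousOn (continuous_pow 2).continuousOn
        (fun t ht => pow_ne_zero _ (ne_of_gt ht.1))
    · rw [interior_Ioc]
      intro t ht
      exact (((hasDerivAt_gg (by linarith [ht.1]) ht.2).div (hasDerivAt_pow 2 t)
        (pow_ne_zero _ (ne_of_gt ht.1))).differentiableAt).differentiableWithinAt
    · rw [interior_Ioc]
      intro t ht
      have hd := (hasDerivAt_gg (by linarith [ht.1]) ht.2).div (hasDerivAt_pow 2 t)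
        (pow_ne_zero _ (ne_of_gt ht.1))
      rw [show deriv q t = _ from hd.deriv]
      have hphi := phi_ge (le_of_lt ht.1) ht.2
      apply div_nonneg _ (by positivity)
      norm_num
      nlinarith [ht.1]
  have h1 : q x ≤ q 1 := key ⟨hpos, hx1⟩ (by constructor <;> norm_num) hx1
  have hq1 : q 1 = 2 * Real.log 2 := by simp [hq, gg_one]
  rw [hq1, hq] at h1
  calc gg x = gg x / x^2 * x^2 := by field_simp
  _ ≤ 2 * Real.log 2 * x^2 := by
      apply mul_le_mul_of_nonneg_right _ (by positivity)
      exact h1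

lemma gg_neg (x : ℝ) : gg (-x) = gg x := by
  unfold gg
  rw [show (1:ℝ) + -x = 1 - x by ring, show (1:ℝ) - -x = 1 + x by ring]
  ring

lemma gg_bounds {x : ℝ} (h1 : -1 ≤ x) (h2 : x ≤ 1) :
    x^2 ≤ gg x ∧ gg x ≤ 2 * Real.log 2 * x^2 := by
  rcases le_or_gt 0 x with hx | hx
  · exact ⟨lower_gg hx h2, upper_gg hx h2⟩
  · have hb := lower_gg (x := -x) (by linarith) (by linarith)
    have hu := upper_gg (x := -x) (by linarith) (by linarith)
    rw [gg_neg, neg_pow] at hb hu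
    norm_num at hb hu
    exact ⟨hb, hu⟩

/-- For every real `x` with `-1 ≤ x ≤ 1`,
`x²/2 ≤ ((1+x)/2)·log₂(1+x) + ((1−x)/2)·log₂(1−x) ≤ x²`.
(At `x = ±1` the convention `0·log₂ 0 = 0` holds automatically, since `Real.log 0 = 0`.) -/
theorem stmt2 (x : ℝ) (h1 : -1 ≤ x) (h2 : x ≤ 1) :
    x^2/2 ≤ (1+x)/2 * Real.logb 2 (1+x) + (1-x)/2 * Real.logb 2 (1-x) ∧
    (1+x)/2 * Real.logb 2 (1+x) + (1-x)/2 * Real.logb 2 (1-x) ≤ x^2 := by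
  have hlog2 : (0:ℝ) < Real.log 2 := Real.log_pos (by norm_num)
  have hlog2' : Real.log 2 ≤ 1 := by
    nlinarith [Real.log_two_lt_d9]
  have hE : (1+x)/2 * Real.logb 2 (1+x) + (1-x)/2 * Real.logb 2 (1-x)
      = gg x / (2 * Real.log 2) := by
    unfold gg
    simp only [Real.logb]
    field_simp
  obtain ⟨hb, hu⟩ := gg_bounds h1 h2
  rw [hE]
  constructor
  · rw [le_div_iff₀ (by positivity)]
    nlinarith [sq_nonneg x]
  · rw [div_le_iff₀ (by positivity)]
    nlinarith
end

section
/- Let U be uniform on {−1,+1}, and let A and B be random variables taking values in finite sets that are conditionally independent given U, i.e., P(A=a, B=b | U=u) = f(a,u)·g(b,u) where f(·,u) and g(·,u) are probability mass functions for each u ∈ {−1,+1}. Then E[(E[U | A, B])²] ≤ E[(E[U | A])²] + E[(E[U | B])²]. Equivalently, I2(U; (A,B)) ≤ I2(U; A) + I2(U; B). -/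
open Finset
open scoped Classical

noncomputable section

/-- Probability of an event under the probability mass function `p` on `Ω`. -/
def pr {Ω : Type*} [Fintype Ω] (p : Ω → ℝ) (E : Ω → Prop) : ℝ :=
  ∑ ω ∈ Finset.univ.filter (fun ω => E ω), p ω

/-- Expectation of `f` under `p`. -/
def expec {Ω : Type*} [Fintype Ω] (p : Ω → ℝ) (f : Ω → ℝ) : ℝ :=
  ∑ ω, p ω * f ω

/-- The conditional expectation `E[U | A]`, as a random variable on `Ω`. -/
def condExp {Ω α : Type*} [Fintype Ω] (p : Ω → ℝ) (A : Ω → α) (U : Ω → ℝ) : Ω → ℝ :=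
  fun ω => expec p (fun ω' => if A ω' = A ω then U ω' else 0) / pr p (fun ω' => A ω' = A ω)

/-- The variance of `f` under `p`. -/
def var {Ω : Type*} [Fintype Ω] (p : Ω → ℝ) (f : Ω → ℝ) : ℝ :=
  expec p (fun ω => (f ω - expec p f)^2)

/-- The chi-squared mutual information `I2(A;B)`. -/
def I2 {Ω α β : Type*} [Fintype Ω] (p : Ω → ℝ) (A : Ω → α) (B : Ω → β) : ℝ :=
  ∑ a ∈ Finset.univ.image A, ∑ b ∈ Finset.univ.image B,
    if 0 < pr p (fun ω => A ω = a) * pr p (fun ω => B ω = b) then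
      (pr p (fun ω => A ω = a ∧ B ω = b) - pr p (fun ω => A ω = a) * pr p (fun ω => B ω = b))^2
        / (pr p (fun ω => A ω = a) * pr p (fun ω => B ω = b))
    else 0

section helpers
variable {Ω : Type*} [Fintype Ω] (p : Ω → ℝ)

lemma pr_eq_sum_ite (E : Ω → Prop) : pr p E = ∑ ω, if E ω then p ω else 0 := by
  rw [pr, Finset.sum_filter]

lemma pr_congr {E E' : Ω → Prop} (h : ∀ ω, E ω ↔ E' ω) : pr p E = pr p E' := by
  simp only [pr_eq_sum_ite]
  exact Finset.sum_congr rfl fun ω _ => by simp [h ω]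

lemma pr_nonneg (hp : ∀ ω, 0 ≤ p ω) (E : Ω → Prop) : 0 ≤ pr p E :=
  Finset.sum_nonneg fun ω _ => hp ω

lemma pr_mono (hp : ∀ ω, 0 ≤ p ω) {E E' : Ω → Prop} (h : ∀ ω, E ω → E' ω) :
    pr p E ≤ pr p E' := by
  apply Finset.sum_le_sum_of_subset_of_nonneg
  · intro ω hω
    simp only [Finset.mem_filter, Finset.mem_univ, true_and] at hω ⊢
    exact h ω hω
  · intro ω _ _; exact hp ω

lemma pr_exists_of_ne_zero {E : Ω → Prop} (h : pr p E ≠ 0) : ∃ ω, E ω := by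
  by_contra hc
  push_neg at hc
  apply h
  rw [pr]
  rw [Finset.filter_false_of_mem (fun ω _ => hc ω)]
  simp

lemma pr_fiber {γ : Type*} [Fintype γ] (C : Ω → γ) (E : Ω → Prop) :
    pr p E = ∑ c, pr p (fun ω => E ω ∧ C ω = c) := by
  simp only [pr_eq_sum_ite]
  rw [Finset.sum_comm]
  refine Finset.sum_congr rfl fun ω _ => ?_
  by_cases h : E ω <;> simp [h, Finset.sum_ite_eq']

variable (U : Ω → ℝ)

lemma pr_split_U (hUr : ∀ ω, U ω = 1 ∨ U ω = -1) (E : Ω → Prop) :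
    pr p E = pr p (fun ω => E ω ∧ U ω = 1) + pr p (fun ω => E ω ∧ U ω = -1) := by
  simp only [pr_eq_sum_ite, ← Finset.sum_add_distrib]
  refine Finset.sum_congr rfl fun ω _ => ?_
  rcases hUr ω with h | h <;> by_cases hE : E ω <;> norm_num [h, hE]

lemma expec_indicator (hUr : ∀ ω, U ω = 1 ∨ U ω = -1) (E : Ω → Prop) :
    expec p (fun ω => if E ω then U ω else 0)
      = pr p (fun ω => E ω ∧ U ω = 1) - pr p (fun ω => E ω ∧ U ω = -1) := by
  simp only [pr_eq_sum_ite, expec, ← Finset.sum_sub_distrib]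
  refine Finset.sum_congr rfl fun ω _ => ?_
  rcases hUr ω with h | h <;> by_cases hE : E ω <;> norm_num [h, hE]

lemma expec_comp {γ : Type*} [Fintype γ] (C : Ω → γ) (φ : γ → ℝ) :
    expec p (fun ω => φ (C ω)) = ∑ c, pr p (fun ω => C ω = c) * φ c := by
  simp only [pr_eq_sum_ite, expec, Finset.sum_mul]
  rw [Finset.sum_comm]
  refine Finset.sum_congr rfl fun ω _ => ?_
  simp [ite_mul, Finset.sum_ite_eq']


lemma pr_eq_zero_of_not_mem_image {γ : Type*} [Fintype γ] (C : Ω → γ) (c : γ)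
    (hc : c ∉ Finset.univ.image C) : pr p (fun ω => C ω = c) = 0 := by
  by_contra hne
  obtain ⟨ω, hω⟩ := pr_exists_of_ne_zero p hne
  exact hc (Finset.mem_image.mpr ⟨ω, Finset.mem_univ ω, hω⟩)

end helpers

lemma sum_poly3 {β : Type*} [Fintype β] (q s : β → ℝ) (c0 c1 c2 c3 : ℝ) :
    ∑ b, q b * (c0 + c1 * s b + c2 * (s b)^2 + c3 * (s b)^3)
      = c0 * (∑ b, q b) + c1 * (∑ b, q b * s b) + c2 * (∑ b, q b * (s b)^2)
        + c3 * (∑ b, q b * (s b)^3) := by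
  simp only [Finset.mul_sum, ← Finset.sum_add_distrib]
  exact Finset.sum_congr rfl fun b _ => by ring

lemma core_ineq {ι κ : Type*} [Fintype ι] [Fintype κ]
    (p r : ι → ℝ) (q s : κ → ℝ)
    (hp : ∀ i, 0 ≤ p i) (hps : ∑ i, p i = 1) (hr : ∀ i, |r i| ≤ 1)
    (hpr : ∑ i, p i * r i = 0)
    (hq : ∀ j, 0 ≤ q j) (hqs : ∑ j, q j = 1) (hs : ∀ j, |s j| ≤ 1)
    (hqs0 : ∑ j, q j * s j = 0) :
    ∑ i, ∑ j, p i * q j * ((r i + s j)^2 / (1 + r i * s j))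
      ≤ (∑ i, p i * (r i)^2) + (∑ j, q j * (s j)^2) := by
  set A3 := ∑ i, p i * (r i)^2 with hA3
  set A4 := ∑ i, p i * (r i)^3 with hA4
  set B3 := ∑ j, q j * (s j)^2 with hB3
  set B4 := ∑ j, q j * (s j)^3 with hB4
  have hr2 : ∀ i, (r i)^2 ≤ 1 := fun i => by nlinarith [abs_le.mp (hr i)]
  have hs2 : ∀ j, (s j)^2 ≤ 1 := fun j => by nlinarith [abs_le.mp (hs j)]
  -- pointwise bound
  have point : ∀ i j, p i * q j * ((r i + s j)^2 / (1 + r i * s j))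
      ≤ p i * q j * ((r i)^2 + (2*(r i) - (r i)^3) * s j + (1 - (r i)^2) * (s j)^2
          + ((r i)^3 - r i) * (s j)^3) := by
    intro i j
    have hpq : 0 ≤ p i * q j := mul_nonneg (hp i) (hq j)
    have h1 : 0 ≤ 1 + r i * s j := by nlinarith [abs_le.mp (hr i), abs_le.mp (hs j)]
    rcases h1.lt_or_eq with hpos | hzero
    · apply mul_le_mul_of_nonneg_left _ hpq
      rw [div_le_iff₀ hpos]
      nlinarith [mul_nonneg (mul_nonneg (sub_nonneg.mpr (hr2 i)) (sub_nonneg.mpr (hs2 j)))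
        (sq_nonneg (r i * s j))]
    · have hz : 1 + r i * s j = 0 := hzero.symm
      rw [hz, div_zero, mul_zero]
      have hrs : r i * s j = -1 := by linarith
      have hri : (r i)^2 = 1 := by nlinarith [hr2 i, hs2 j]
      have hsr : s j = - r i := by linear_combination (r i) * hrs - (s j) * hri
      rw [hsr]
      have : (r i)^2 + (2*(r i) - (r i)^3) * (-r i) + (1 - (r i)^2) * (-r i)^2
          + ((r i)^3 - r i) * (-r i)^3 = 0 := by linear_combination (-(r i)^4) * hri
      rw [this, mul_zero]
  calc ∑ i, ∑ j, p i * q j * ((r i + s j)^2 / (1 + r i * s j))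
      ≤ ∑ i, ∑ j, p i * q j * ((r i)^2 + (2*(r i) - (r i)^3) * s j + (1 - (r i)^2) * (s j)^2
          + ((r i)^3 - r i) * (s j)^3) :=
        Finset.sum_le_sum fun i _ => Finset.sum_le_sum fun j _ => point i j
    _ = ∑ i, p i * ((r i)^2 * (∑ j, q j) + (2*(r i) - (r i)^3) * (∑ j, q j * s j)
          + (1 - (r i)^2) * B3 + ((r i)^3 - r i) * B4) := by
        refine Finset.sum_congr rfl fun i _ => ?_
        rw [← sum_poly3 q s]
        rw [Finset.mul_sum]
        exact Finset.sum_congr rfl fun j _ => by ring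
    _ = ∑ i, p i * (B3 + (-B4) * (r i) + (1 - B3) * (r i)^2 + B4 * (r i)^3) := by
        rw [hqs, hqs0]
        exact Finset.sum_congr rfl fun i _ => by ring
    _ = B3 * (∑ i, p i) + (-B4) * (∑ i, p i * r i) + (1 - B3) * A3 + B4 * A4 := by
        rw [← sum_poly3 p r]
    _ = A3 + B3 - A3 * B3 + A4 * B4 := by rw [hps, hpr]; ring
    _ ≤ A3 + B3 := by
        have hA3n : 0 ≤ A3 := Finset.sum_nonneg fun i _ => mul_nonneg (hp i) (sq_nonneg _)
        have hB3n : 0 ≤ B3 := Finset.sum_nonneg fun j _ => mul_nonneg (hq j) (sq_nonneg _)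
        have hA : |A4| ≤ A3 := by
          calc |A4| ≤ ∑ i, |p i * (r i)^3| := Finset.abs_sum_le_sum_abs _ _
            _ ≤ A3 := Finset.sum_le_sum fun i _ => by
                rw [abs_mul, abs_of_nonneg (hp i), abs_pow]
                have h3 : |r i|^3 ≤ |r i|^2 :=
                  pow_le_pow_of_le_one (abs_nonneg _) (hr i) (by norm_num)
                rw [sq_abs] at h3
                exact mul_le_mul_of_nonneg_left h3 (hp i)
        have hB : |B4| ≤ B3 := by
          calc |B4| ≤ ∑ j, |q j * (s j)^3| := Finset.abs_sum_le_sum_abs _ _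
            _ ≤ B3 := Finset.sum_le_sum fun j _ => by
                rw [abs_mul, abs_of_nonneg (hq j), abs_pow]
                have h3 : |s j|^3 ≤ |s j|^2 :=
                  pow_le_pow_of_le_one (abs_nonneg _) (hs j) (by norm_num)
                rw [sq_abs] at h3
                exact mul_le_mul_of_nonneg_left h3 (hq j)
        have : A4 * B4 ≤ A3 * B3 := by
          calc A4 * B4 ≤ |A4 * B4| := le_abs_self _
            _ = |A4| * |B4| := abs_mul _ _
            _ ≤ A3 * B3 := mul_le_mul hA hB (abs_nonneg _) hA3n
        nlinarith [mul_nonneg hA3n hB3n]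
  done

lemma raw_ineq {ι κ : Type*} [Fintype ι] [Fintype κ]
    (x x' : ι → ℝ) (y y' : κ → ℝ)
    (hx : ∀ a, 0 ≤ x a) (hx' : ∀ a, 0 ≤ x' a)
    (hy : ∀ b, 0 ≤ y b) (hy' : ∀ b, 0 ≤ y' b)
    (hxs : ∑ a, x a = 1) (hxs' : ∑ a, x' a = 1)
    (hys : ∑ b, y b = 1) (hys' : ∑ b, y' b = 1) :
    ∑ a, ∑ b, (x a * y b - x' a * y' b)^2 / (2*(x a * y b + x' a * y' b))
      ≤ (∑ a, (x a - x' a)^2 / (2*(x a + x' a)))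
        + (∑ b, (y b - y' b)^2 / (2*(y b + y' b))) := by
  set p : ι → ℝ := fun a => (x a + x' a)/2 with hpdef
  set r : ι → ℝ := fun a => (x a - x' a)/(x a + x' a) with hrdef
  set q : κ → ℝ := fun b => (y b + y' b)/2 with hqdef
  set s : κ → ℝ := fun b => (y b - y' b)/(y b + y' b) with hsdef
  have hxx : ∀ a, x a + x' a = 0 → x a = 0 ∧ x' a = 0 := fun a h =>
    ⟨le_antisymm (by linarith [hx' a]) (hx a), le_antisymm (by linarith [hx a]) (hx' a)⟩
  have hyy : ∀ b, y b + y' b = 0 → y b = 0 ∧ y' b = 0 := fun b h =>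
    ⟨le_antisymm (by linarith [hy' b]) (hy b), le_antisymm (by linarith [hy b]) (hy' b)⟩
  have hp : ∀ a, 0 ≤ p a := fun a => by
    simp only [hpdef]; linarith [hx a, hx' a]
  have hq : ∀ b, 0 ≤ q b := fun b => by
    simp only [hqdef]; linarith [hy b, hy' b]
  have hps : ∑ a, p a = 1 := by
    simp only [hpdef, ← Finset.sum_div, Finset.sum_add_distrib, hxs, hxs']; norm_num
  have hqs : ∑ b, q b = 1 := by
    simp only [hqdef, ← Finset.sum_div, Finset.sum_add_distrib, hys, hys']; norm_num
  have hr : ∀ a, |r a| ≤ 1 := by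
    intro a
    simp only [hrdef]
    rcases eq_or_lt_of_le (by linarith [hx a, hx' a] : (0:ℝ) ≤ x a + x' a) with h | h
    · rw [← h, div_zero]; norm_num
    · rw [abs_div, abs_of_pos h, div_le_one h]
      rw [abs_le]
      constructor <;> linarith [hx a, hx' a]
  have hs : ∀ b, |s b| ≤ 1 := by
    intro b
    simp only [hsdef]
    rcases eq_or_lt_of_le (by linarith [hy b, hy' b] : (0:ℝ) ≤ y b + y' b) with h | h
    · rw [← h, div_zero]; norm_num
    · rw [abs_div, abs_of_pos h, div_le_one h]
      rw [abs_le]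
      constructor <;> linarith [hy b, hy' b]
  have hprpt : ∀ a, p a * r a = (x a - x' a)/2 := by
    intro a
    simp only [hpdef, hrdef]
    rcases eq_or_lt_of_le (by linarith [hx a, hx' a] : (0:ℝ) ≤ x a + x' a) with h | h
    · obtain ⟨h1, h2⟩ := hxx a h.symm
      rw [h1, h2]; norm_num
    · field_simp
  have hqspt : ∀ b, q b * s b = (y b - y' b)/2 := by
    intro b
    simp only [hqdef, hsdef]
    rcases eq_or_lt_of_le (by linarith [hy b, hy' b] : (0:ℝ) ≤ y b + y' b) with h | h
    · obtain ⟨h1, h2⟩ := hyy b h.symm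
      rw [h1, h2]; norm_num
    · field_simp
  have hpr : ∑ a, p a * r a = 0 := by
    rw [Finset.sum_congr rfl fun a _ => hprpt a]
    rw [← Finset.sum_div, Finset.sum_sub_distrib, hxs, hxs']
    norm_num
  have hqs0 : ∑ b, q b * s b = 0 := by
    rw [Finset.sum_congr rfl fun b _ => hqspt b]
    rw [← Finset.sum_div, Finset.sum_sub_distrib, hys, hys']
    norm_num
  -- per-index identities
  have idr : ∀ a, (x a - x' a)^2 / (2*(x a + x' a)) = p a * (r a)^2 := by
    intro a
    simp only [hpdef, hrdef]
    rcases eq_or_lt_of_le (by linarith [hx a, hx' a] : (0:ℝ) ≤ x a + x' a) with h | h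
    · obtain ⟨h1, h2⟩ := hxx a h.symm
      rw [h1, h2]; norm_num
    · rw [div_pow]
      field_simp
  have ids : ∀ b, (y b - y' b)^2 / (2*(y b + y' b)) = q b * (s b)^2 := by
    intro b
    simp only [hqdef, hsdef]
    rcases eq_or_lt_of_le (by linarith [hy b, hy' b] : (0:ℝ) ≤ y b + y' b) with h | h
    · obtain ⟨h1, h2⟩ := hyy b h.symm
      rw [h1, h2]; norm_num
    · rw [div_pow]
      field_simp
  have idj : ∀ a b, (x a * y b - x' a * y' b)^2 / (2*(x a * y b + x' a * y' b))
      = p a * q b * ((r a + s b)^2 / (1 + r a * s b)) := by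
    intro a b
    rcases eq_or_lt_of_le (by linarith [hx a, hx' a] : (0:ℝ) ≤ x a + x' a) with h | h
    · obtain ⟨h1, h2⟩ := hxx a h.symm
      have hp0 : p a = 0 := by simp only [hpdef]; rw [h1, h2]; norm_num
      rw [hp0, h1, h2]
      norm_num
    rcases eq_or_lt_of_le (by linarith [hy b, hy' b] : (0:ℝ) ≤ y b + y' b) with h' | h'
    · obtain ⟨h1, h2⟩ := hyy b h'.symm
      have hq0 : q b = 0 := by simp only [hqdef]; rw [h1, h2]; norm_num
      rw [hq0, h1, h2]
      norm_num
    -- both marginals positive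
    have hxne : x a + x' a ≠ 0 := ne_of_gt h
    have hyne : y b + y' b ≠ 0 := ne_of_gt h'
    have hden : x a * y b + x' a * y' b = 2 * (p a * q b) * (1 + r a * s b) := by
      simp only [hpdef, hqdef, hrdef, hsdef]
      field_simp
      ring
    have hnum : x a * y b - x' a * y' b = 2 * (p a * q b) * (r a + s b) := by
      simp only [hpdef, hqdef, hrdef, hsdef]
      field_simp
      ring
    have hppos : 0 < p a := by simp only [hpdef]; linarith
    have hqpos : 0 < q b := by simp only [hqdef]; linarith
    have hpqpos : 0 < p a * q b := mul_pos hppos hqpos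
    rcases eq_or_lt_of_le (by nlinarith [mul_nonneg (hx a) (hy b), mul_nonneg (hx' a) (hy' b)] :
        (0:ℝ) ≤ x a * y b + x' a * y' b) with hd | hd
    · have h0 : 2 * (p a * q b) * (1 + r a * s b) = 0 := (hd.trans hden).symm
      have hz : 1 + r a * s b = 0 := by
        rcases mul_eq_zero.mp h0 with hcase | hcase
        · exfalso; nlinarith
        · exact hcase
      rw [hz, div_zero, mul_zero, ← hd, mul_zero, div_zero]
    · have hz : 0 < 1 + r a * s b := by nlinarith [hden]
      have hzne : 1 + r a * s b ≠ 0 := ne_of_gt hz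
      have hpne : p a ≠ 0 := ne_of_gt hppos
      have hqne : q b ≠ 0 := ne_of_gt hqpos
      rw [hnum, hden]
      field_simp
  calc ∑ a, ∑ b, (x a * y b - x' a * y' b)^2 / (2*(x a * y b + x' a * y' b))
      = ∑ a, ∑ b, p a * q b * ((r a + s b)^2 / (1 + r a * s b)) :=
        Finset.sum_congr rfl fun a _ => Finset.sum_congr rfl fun b _ => idj a b
    _ ≤ (∑ a, p a * (r a)^2) + (∑ b, q b * (s b)^2) :=
        core_ineq p r q s hp hps hr hpr hq hqs hs hqs0
    _ = (∑ a, (x a - x' a)^2 / (2*(x a + x' a))) + (∑ b, (y b - y' b)^2 / (2*(y b + y' b))) := by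
        rw [Finset.sum_congr rfl fun a _ => idr a, Finset.sum_congr rfl fun b _ => ids b]

lemma I2_eval {Ω γ : Type*} [Fintype Ω] [Fintype γ] (p : Ω → ℝ) (U : Ω → ℝ) (C : Ω → γ)
    (hUr : ∀ ω, U ω = 1 ∨ U ω = -1) (F F' : γ → ℝ)
    (hF : ∀ c, 0 ≤ F c) (hF' : ∀ c, 0 ≤ F' c)
    (hU1 : pr p (fun ω => U ω = 1) = 1/2) (hU2 : pr p (fun ω => U ω = -1) = 1/2)
    (h1 : ∀ c, pr p (fun ω => U ω = 1 ∧ C ω = c) = 1/2 * F c)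
    (h2 : ∀ c, pr p (fun ω => U ω = -1 ∧ C ω = c) = 1/2 * F' c)
    (hC : ∀ c, pr p (fun ω => C ω = c) = (F c + F' c)/2) :
    I2 p U C = ∑ c, (F c - F' c)^2 / (2*(F c + F' c)) := by
  have himg : Finset.univ.image U = ({1, -1} : Finset ℝ) := by
    apply Finset.Subset.antisymm
    · intro u hu
      obtain ⟨ω, _, hω⟩ := Finset.mem_image.mp hu
      simp only [Finset.mem_insert, Finset.mem_singleton]
      rcases hUr ω with h | h
      · left; rw [← hω, h]
      · right; rw [← hω, h]
    · intro u hu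
      simp only [Finset.mem_insert, Finset.mem_singleton] at hu
      rcases hu with rfl | rfl
      · have hne : pr p (fun ω => U ω = 1) ≠ 0 := by rw [hU1]; norm_num
        obtain ⟨ω, hω⟩ := pr_exists_of_ne_zero p hne
        exact Finset.mem_image.mpr ⟨ω, Finset.mem_univ ω, hω⟩
      · have hne : pr p (fun ω => U ω = -1) ≠ 0 := by rw [hU2]; norm_num
        obtain ⟨ω, hω⟩ := pr_exists_of_ne_zero p hne
        exact Finset.mem_image.mpr ⟨ω, Finset.mem_univ ω, hω⟩
  rw [I2, himg]
  rw [show ({1,-1} : Finset ℝ) = insert 1 {-1} from rfl]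
  rw [Finset.sum_insert (by norm_num), Finset.sum_singleton]
  rw [← Finset.sum_add_distrib]
  rw [Finset.sum_subset (Finset.subset_univ (Finset.univ.image C))
    (fun c _ hc => by simp [pr_eq_zero_of_not_mem_image p C c hc])]
  refine Finset.sum_congr rfl fun c _ => ?_
  rw [hU1, hU2, h1 c, h2 c, hC c]
  by_cases hd : F c + F' c = 0
  · have hF0 : F c = 0 := le_antisymm (by linarith [hF' c]) (hF c)
    have hF'0 : F' c = 0 := le_antisymm (by linarith [hF c]) (hF' c)
    rw [hF0, hF'0]
    norm_num
  · have hpos : 0 < F c + F' c := lt_of_le_of_ne (by linarith [hF c, hF' c]) (Ne.symm hd)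
    rw [if_pos (by linarith), if_pos (by linarith)]
    field_simp
    ring

/-- If `U` is uniform on `{-1,+1}` and `A`, `B` are conditionally independent
given `U` (outputs of two independent channels `f`, `g` applied to `U`), then
`E[(E[U | A,B])²] ≤ E[(E[U | A])²] + E[(E[U | B])²]`, i.e. `I2(U;(A,B)) ≤ I2(U;A) + I2(U;B)`. -/
theorem stmt4 {Ω α β : Type*} [Fintype Ω] [Fintype α] [Fintype β]
    (p : Ω → ℝ) (hp : ∀ ω, 0 ≤ p ω) (hps : ∑ ω, p ω = 1)
    (U : Ω → ℝ) (A : Ω → α) (B : Ω → β)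
    (hUr : ∀ ω, U ω = 1 ∨ U ω = -1)
    (f : α → ℝ → ℝ) (g : β → ℝ → ℝ)
    (hf0 : ∀ a s, (s = 1 ∨ s = -1) → 0 ≤ f a s)
    (hf1 : ∀ s, (s = 1 ∨ s = -1) → ∑ a, f a s = 1)
    (hg0 : ∀ b s, (s = 1 ∨ s = -1) → 0 ≤ g b s)
    (hg1 : ∀ s, (s = 1 ∨ s = -1) → ∑ b, g b s = 1)
    (hjoint : ∀ u : ℝ, (u = 1 ∨ u = -1) → ∀ (a : α) (b : β),
      pr p (fun ω => U ω = u ∧ A ω = a ∧ B ω = b) = 1/2 * (f a u * g b u)) :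
    expec p (fun ω => (condExp p (fun ω' => (A ω', B ω')) U ω)^2)
      ≤ expec p (fun ω => (condExp p A U ω)^2) + expec p (fun ω => (condExp p B U ω)^2) ∧
    I2 p U (fun ω => (A ω, B ω)) ≤ I2 p U A + I2 p U B := by
  have h1u : ((1:ℝ) = 1 ∨ (1:ℝ) = -1) := Or.inl rfl
  have h2u : ((-1:ℝ) = 1 ∨ (-1:ℝ) = -1) := Or.inr rfl
  -- marginal and joint probabilities
  have hUA : ∀ u, (u = 1 ∨ u = -1) → ∀ a,
      pr p (fun ω => U ω = u ∧ A ω = a) = 1/2 * f a u := by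
    intro u hu a
    rw [pr_fiber p B (fun ω => U ω = u ∧ A ω = a)]
    rw [Finset.sum_congr rfl fun b _ =>
      (pr_congr p (fun ω => by tauto)).trans (hjoint u hu a b)]
    simp only [← Finset.mul_sum]
    rw [hg1 u hu, mul_one]
  have hUB : ∀ u, (u = 1 ∨ u = -1) → ∀ b,
      pr p (fun ω => U ω = u ∧ B ω = b) = 1/2 * g b u := by
    intro u hu b
    rw [pr_fiber p A (fun ω => U ω = u ∧ B ω = b)]
    rw [Finset.sum_congr rfl fun a _ =>
      (pr_congr p (fun ω => by tauto)).trans (hjoint u hu a b)]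
    rw [Finset.sum_congr rfl fun a _ =>
      (by ring : 1/2 * (f a u * g b u) = f a u * (1/2 * g b u))]
    rw [← Finset.sum_mul, hf1 u hu, one_mul]
  have hU : ∀ u, (u = 1 ∨ u = -1) → pr p (fun ω => U ω = u) = 1/2 := by
    intro u hu
    rw [pr_fiber p A (fun ω => U ω = u)]
    rw [Finset.sum_congr rfl fun a _ => hUA u hu a]
    rw [← Finset.mul_sum, hf1 u hu, mul_one]
  have hA : ∀ a, pr p (fun ω => A ω = a) = (f a 1 + f a (-1))/2 := by
    intro a
    rw [pr_split_U p U hUr (fun ω => A ω = a)]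
    rw [(pr_congr p (fun ω => and_comm)).trans (hUA 1 h1u a),
        (pr_congr p (fun ω => and_comm)).trans (hUA (-1) h2u a)]
    ring
  have hB : ∀ b, pr p (fun ω => B ω = b) = (g b 1 + g b (-1))/2 := by
    intro b
    rw [pr_split_U p U hUr (fun ω => B ω = b)]
    rw [(pr_congr p (fun ω => and_comm)).trans (hUB 1 h1u b),
        (pr_congr p (fun ω => and_comm)).trans (hUB (-1) h2u b)]
    ring
  have hUABp : ∀ u, (u = 1 ∨ u = -1) → ∀ c : α × β,
      pr p (fun ω => U ω = u ∧ (A ω, B ω) = c) = 1/2 * (f c.1 u * g c.2 u) := by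
    intro u hu c
    rw [pr_congr p (E' := fun ω => U ω = u ∧ A ω = c.1 ∧ B ω = c.2)
      (fun ω => by simp [Prod.ext_iff])]
    exact hjoint u hu c.1 c.2
  have hABp : ∀ c : α × β, pr p (fun ω => (A ω, B ω) = c)
      = (f c.1 1 * g c.2 1 + f c.1 (-1) * g c.2 (-1))/2 := by
    intro c
    rw [pr_split_U p U hUr (fun ω => (A ω, B ω) = c)]
    rw [(pr_congr p (fun ω => and_comm)).trans (hUABp 1 h1u c),
        (pr_congr p (fun ω => and_comm)).trans (hUABp (-1) h2u c)]
    ring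
  -- conditional expectations
  have cA : ∀ a, expec p (fun ω' => if A ω' = a then U ω' else 0) / pr p (fun ω' => A ω' = a)
      = (f a 1 - f a (-1)) / (f a 1 + f a (-1)) := by
    intro a
    rw [expec_indicator p U hUr (fun ω => A ω = a)]
    rw [(pr_congr p (fun ω => and_comm)).trans (hUA 1 h1u a),
        (pr_congr p (fun ω => and_comm)).trans (hUA (-1) h2u a), hA a]
    by_cases hd : f a 1 + f a (-1) = 0
    · have e1 : f a 1 = 0 := le_antisymm (by linarith [hf0 a (-1) h2u]) (hf0 a 1 h1u)
      have e2 : f a (-1) = 0 := le_antisymm (by linarith [hf0 a 1 h1u]) (hf0 a (-1) h2u)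
      rw [e1, e2]; norm_num
    · field_simp
  have cB : ∀ b, expec p (fun ω' => if B ω' = b then U ω' else 0) / pr p (fun ω' => B ω' = b)
      = (g b 1 - g b (-1)) / (g b 1 + g b (-1)) := by
    intro b
    rw [expec_indicator p U hUr (fun ω => B ω = b)]
    rw [(pr_congr p (fun ω => and_comm)).trans (hUB 1 h1u b),
        (pr_congr p (fun ω => and_comm)).trans (hUB (-1) h2u b), hB b]
    by_cases hd : g b 1 + g b (-1) = 0
    · have e1 : g b 1 = 0 := le_antisymm (by linarith [hg0 b (-1) h2u]) (hg0 b 1 h1u)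
      have e2 : g b (-1) = 0 := le_antisymm (by linarith [hg0 b 1 h1u]) (hg0 b (-1) h2u)
      rw [e1, e2]; norm_num
    · field_simp
  have cAB : ∀ ω, condExp p (fun ω' => (A ω', B ω')) U ω
      = (f (A ω) 1 * g (B ω) 1 - f (A ω) (-1) * g (B ω) (-1))
        / (f (A ω) 1 * g (B ω) 1 + f (A ω) (-1) * g (B ω) (-1)) := by
    intro ω
    simp only [condExp]
    rw [expec_indicator p U hUr (fun ω' => (A ω', B ω') = (A ω, B ω))]
    rw [(pr_congr p (fun ω' => and_comm)).trans (hUABp 1 h1u (A ω, B ω)),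
        (pr_congr p (fun ω' => and_comm)).trans (hUABp (-1) h2u (A ω, B ω)),
        hABp (A ω, B ω)]
    show (1/2 * (f (A ω) 1 * g (B ω) 1) - 1/2 * (f (A ω) (-1) * g (B ω) (-1)))
        / ((f (A ω) 1 * g (B ω) 1 + f (A ω) (-1) * g (B ω) (-1))/2) = _
    by_cases hd : f (A ω) 1 * g (B ω) 1 + f (A ω) (-1) * g (B ω) (-1) = 0
    · have n1 : 0 ≤ f (A ω) 1 * g (B ω) 1 := mul_nonneg (hf0 _ 1 h1u) (hg0 _ 1 h1u)
      have n2 : 0 ≤ f (A ω) (-1) * g (B ω) (-1) :=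
        mul_nonneg (hf0 _ (-1) h2u) (hg0 _ (-1) h2u)
      have e1 : f (A ω) 1 * g (B ω) 1 = 0 := le_antisymm (by linarith) n1
      have e2 : f (A ω) (-1) * g (B ω) (-1) = 0 := le_antisymm (by linarith) n2
      rw [e1, e2]; norm_num
    · field_simp
  -- expectation of squared conditional expectations
  have EA : expec p (fun ω => (condExp p A U ω)^2)
      = ∑ a, (f a 1 - f a (-1))^2 / (2*(f a 1 + f a (-1))) := by
    have hfun : (fun ω => (condExp p A U ω)^2)
        = fun ω => (fun a => ((f a 1 - f a (-1)) / (f a 1 + f a (-1)))^2) (A ω) := by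
      funext ω
      simp only [condExp]
      rw [cA (A ω)]
    rw [hfun, expec_comp p A (fun a => ((f a 1 - f a (-1)) / (f a 1 + f a (-1)))^2)]
    refine Finset.sum_congr rfl fun a _ => ?_
    rw [hA a]
    by_cases hd : f a 1 + f a (-1) = 0
    · rw [hd]; norm_num
    · field_simp
  have EB : expec p (fun ω => (condExp p B U ω)^2)
      = ∑ b, (g b 1 - g b (-1))^2 / (2*(g b 1 + g b (-1))) := by
    have hfun : (fun ω => (condExp p B U ω)^2)
        = fun ω => (fun b => ((g b 1 - g b (-1)) / (g b 1 + g b (-1)))^2) (B ω) := by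
      funext ω
      simp only [condExp]
      rw [cB (B ω)]
    rw [hfun, expec_comp p B (fun b => ((g b 1 - g b (-1)) / (g b 1 + g b (-1)))^2)]
    refine Finset.sum_congr rfl fun b _ => ?_
    rw [hB b]
    by_cases hd : g b 1 + g b (-1) = 0
    · rw [hd]; norm_num
    · field_simp
  have EAB : expec p (fun ω => (condExp p (fun ω' => (A ω', B ω')) U ω)^2)
      = ∑ a, ∑ b, (f a 1 * g b 1 - f a (-1) * g b (-1))^2
          / (2*(f a 1 * g b 1 + f a (-1) * g b (-1))) := by
    have hfun : (fun ω => (condExp p (fun ω' => (A ω', B ω')) U ω)^2)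
        = fun ω => (fun c : α × β => ((f c.1 1 * g c.2 1 - f c.1 (-1) * g c.2 (-1))
            / (f c.1 1 * g c.2 1 + f c.1 (-1) * g c.2 (-1)))^2) ((A ω, B ω)) := by
      funext ω
      rw [cAB ω]
    rw [hfun, expec_comp p (fun ω => (A ω, B ω))
      (fun c : α × β => ((f c.1 1 * g c.2 1 - f c.1 (-1) * g c.2 (-1))
            / (f c.1 1 * g c.2 1 + f c.1 (-1) * g c.2 (-1)))^2)]
    rw [show (∑ c : α × β, pr p (fun ω => (A ω, B ω) = c)
          * ((f c.1 1 * g c.2 1 - f c.1 (-1) * g c.2 (-1))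
            / (f c.1 1 * g c.2 1 + f c.1 (-1) * g c.2 (-1)))^2)
        = ∑ c : α × β, (f c.1 1 * g c.2 1 - f c.1 (-1) * g c.2 (-1))^2
          / (2*(f c.1 1 * g c.2 1 + f c.1 (-1) * g c.2 (-1))) from
      Finset.sum_congr rfl fun c _ => by
        rw [hABp c]
        by_cases hd : f c.1 1 * g c.2 1 + f c.1 (-1) * g c.2 (-1) = 0
        · rw [hd]; norm_num
        · field_simp]
    rw [Fintype.sum_prod_type]
  -- I2 evaluations
  have I2A : I2 p U A = ∑ a, (f a 1 - f a (-1))^2 / (2*(f a 1 + f a (-1))) :=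
    I2_eval p U A hUr (fun a => f a 1) (fun a => f a (-1))
      (fun a => hf0 a 1 h1u) (fun a => hf0 a (-1) h2u)
      (hU 1 h1u) (hU (-1) h2u) (hUA 1 h1u) (hUA (-1) h2u) hA
  have I2B : I2 p U B = ∑ b, (g b 1 - g b (-1))^2 / (2*(g b 1 + g b (-1))) :=
    I2_eval p U B hUr (fun b => g b 1) (fun b => g b (-1))
      (fun b => hg0 b 1 h1u) (fun b => hg0 b (-1) h2u)
      (hU 1 h1u) (hU (-1) h2u) (hUB 1 h1u) (hUB (-1) h2u) hB
  have I2AB : I2 p U (fun ω => (A ω, B ω))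
      = ∑ a, ∑ b, (f a 1 * g b 1 - f a (-1) * g b (-1))^2
          / (2*(f a 1 * g b 1 + f a (-1) * g b (-1))) := by
    rw [I2_eval p U (fun ω => (A ω, B ω)) hUr
      (fun c => f c.1 1 * g c.2 1) (fun c => f c.1 (-1) * g c.2 (-1))
      (fun c => mul_nonneg (hf0 _ 1 h1u) (hg0 _ 1 h1u))
      (fun c => mul_nonneg (hf0 _ (-1) h2u) (hg0 _ (-1) h2u))
      (hU 1 h1u) (hU (-1) h2u) (hUABp 1 h1u) (hUABp (-1) h2u) hABp]
    rw [Fintype.sum_prod_type]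
  -- main inequality
  have main : ∑ a, ∑ b, (f a 1 * g b 1 - f a (-1) * g b (-1))^2
          / (2*(f a 1 * g b 1 + f a (-1) * g b (-1)))
      ≤ (∑ a, (f a 1 - f a (-1))^2 / (2*(f a 1 + f a (-1))))
        + (∑ b, (g b 1 - g b (-1))^2 / (2*(g b 1 + g b (-1)))) :=
    raw_ineq (fun a => f a 1) (fun a => f a (-1)) (fun b => g b 1) (fun b => g b (-1))
      (fun a => hf0 a 1 h1u) (fun a => hf0 a (-1) h2u)
      (fun b => hg0 b 1 h1u) (fun b => hg0 b (-1) h2u)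
      (hf1 1 h1u) (hf1 (-1) h2u) (hg1 1 h1u) (hg1 (-1) h2u)
  constructor
  · rw [EA, EB, EAB]; exact main
  · rw [I2A, I2B, I2AB]; exact main

end
end
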